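/- Let F : ℝⁿ × ℝᵐ → ℝ ∪ {+∞} be proper and lower semicontinuous, fix ȳ ∈ ℝᵐ and u ∈ 𝕊 ⊆ ℝⁿ, and denote by F_x the function x ↦ F(x,ȳ). If the qualification condition '(0,η) ∈ ∂^∞F(∞;(u,0)) implies η = 0' holds, then ∂F_x(∞;u) ⊆ {ξ ∈ ℝⁿ : ∃ η ∈ ℝᵐ with (ξ,η) ∈ ∂F(∞;(u,0))} and ∂^∞F_x(∞;u) ⊆ {ξ ∈ ℝⁿ : ∃ η ∈ ℝᵐ with (ξ,η) ∈ ∂^∞F(∞;(u,0))}. -/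

import Mathlib

open Filter Topology Set
open scoped RealInnerProductSpace Pointwise

noncomputable section

/-- `ℝⁿ` with the Euclidean structure. -/
abbrev Eu (n : ℕ) := EuclideanSpace ℝ (Fin n)

/-- `x_k →ᵘ ∞` : `‖x_k‖ → ∞` and `x_k / ‖x_k‖ → u`. -/
def TendstoDirInfty {n : ℕ} (x : ℕ → Eu n) (u : Eu n) : Prop :=
  Tendsto (fun k => ‖x k‖) atTop atTop ∧
  Tendsto (fun k => ‖x k‖⁻¹ • x k) atTop (𝓝 u)

/-- The Euclidean norm of `p ∈ ℝⁿ × ℝ`. -/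
def pnorm {n : ℕ} (p : Eu n × ℝ) : ℝ := Real.sqrt (‖p.1‖ ^ 2 + p.2 ^ 2)

/-- The Euclidean inner product on `ℝⁿ × ℝ`. -/
def pinner {n : ℕ} (v p : Eu n × ℝ) : ℝ := ⟪v.1, p.1⟫ + v.2 * p.2

/-- The Fréchet (regular) normal cone to `S ⊆ ℝⁿ × ℝ` at `q` (empty when `q ∉ S`). -/
def frechetNCP {n : ℕ} (S : Set (Eu n × ℝ)) (q : Eu n × ℝ) : Set (Eu n × ℝ) :=
  {w | q ∈ S ∧ ∀ ε > 0, ∃ δ > 0, ∀ p ∈ S, pnorm (p - q) < δ →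
        pinner w (p - q) ≤ ε * pnorm (p - q)}

/-- Epigraph of `f : ℝⁿ → ℝ ∪ {+∞}`. -/
def epigraph {n : ℕ} (f : Eu n → EReal) : Set (Eu n × ℝ) := {p | f p.1 ≤ (p.2 : EReal)}

/-- The limiting subdifferential of `f` in direction `u` at infinity:
`ξ` with `(ξ_k, -s_k) ∈ N̂((x_k, r_k); epi f)`, `r_k ≥ f(x_k)`, `x_k →ᵘ ∞`,
`(ξ_k, -s_k) → (ξ, -1)`. -/
def dirSubdiffInfty {n : ℕ} (f : Eu n → EReal) (u : Eu n) : Set (Eu n) :=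
  {ξ | ∃ (x : ℕ → Eu n) (r : ℕ → ℝ) (w : ℕ → Eu n × ℝ),
      TendstoDirInfty x u ∧ (∀ k, f (x k) ≤ ((r k : ℝ) : EReal)) ∧
      (∀ k, w k ∈ frechetNCP (epigraph f) (x k, r k)) ∧
      Tendsto w atTop (𝓝 (ξ, (-1 : ℝ)))}

/-- The singular subdifferential of `f` in direction `u` at infinity. -/
def dirSingSubdiffInfty {n : ℕ} (f : Eu n → EReal) (u : Eu n) : Set (Eu n) :=
  {ξ | ∃ (x : ℕ → Eu n) (r : ℕ → ℝ) (w : ℕ → Eu n × ℝ),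
      TendstoDirInfty x u ∧ (∀ k, f (x k) ≤ ((r k : ℝ) : EReal)) ∧
      (∀ k, w k ∈ frechetNCP (epigraph f) (x k, r k)) ∧
      Tendsto w atTop (𝓝 (ξ, (0 : ℝ)))}

/-- The Euclidean norm of `p ∈ ℝⁿ × ℝᵐ`. -/
def pnorm2 {n m : ℕ} (p : Eu n × Eu m) : ℝ := Real.sqrt (‖p.1‖ ^ 2 + ‖p.2‖ ^ 2)

/-- The Euclidean norm of `q ∈ (ℝⁿ × ℝᵐ) × ℝ`. -/
def tnorm {n m : ℕ} (q : (Eu n × Eu m) × ℝ) : ℝ :=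
  Real.sqrt (‖q.1.1‖ ^ 2 + ‖q.1.2‖ ^ 2 + q.2 ^ 2)

/-- The Euclidean inner product on `(ℝⁿ × ℝᵐ) × ℝ`. -/
def tinner {n m : ℕ} (w q : (Eu n × Eu m) × ℝ) : ℝ :=
  ⟪w.1.1, q.1.1⟫ + ⟪w.1.2, q.1.2⟫ + w.2 * q.2

/-- The Fréchet normal cone to `S ⊆ (ℝⁿ × ℝᵐ) × ℝ` at `q`. -/
def frechetNCT {n m : ℕ} (S : Set ((Eu n × Eu m) × ℝ)) (q : (Eu n × Eu m) × ℝ) :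
    Set ((Eu n × Eu m) × ℝ) :=
  {w | q ∈ S ∧ ∀ ε > 0, ∃ δ > 0, ∀ p ∈ S, tnorm (p - q) < δ →
        tinner w (p - q) ≤ ε * tnorm (p - q)}

/-- Epigraph of `F : ℝⁿ × ℝᵐ → ℝ ∪ {+∞}`. -/
def epigraph2 {n m : ℕ} (F : Eu n × Eu m → EReal) : Set ((Eu n × Eu m) × ℝ) :=
  {p | F p.1 ≤ (p.2 : EReal)}

/-- `x_k →ʷ ∞` in `ℝⁿ × ℝᵐ` (Euclidean norm). -/
def TendstoDirInfty2 {n m : ℕ} (x : ℕ → Eu n × Eu m) (w : Eu n × Eu m) : Prop :=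
  Tendsto (fun k => pnorm2 (x k)) atTop atTop ∧
  Tendsto (fun k => (pnorm2 (x k))⁻¹ • x k) atTop (𝓝 w)

/-- The limiting subdifferential of `F` in direction `w` at infinity. -/
def dirSubdiffInfty2 {n m : ℕ} (F : Eu n × Eu m → EReal) (w : Eu n × Eu m) :
    Set (Eu n × Eu m) :=
  {ξ | ∃ (x : ℕ → Eu n × Eu m) (r : ℕ → ℝ) (v : ℕ → (Eu n × Eu m) × ℝ),
      TendstoDirInfty2 x w ∧ (∀ k, F (x k) ≤ ((r k : ℝ) : EReal)) ∧
      (∀ k, v k ∈ frechetNCT (epigraph2 F) (x k, r k)) ∧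
      Tendsto v atTop (𝓝 (ξ, (-1 : ℝ)))}

/-- The singular subdifferential of `F` in direction `w` at infinity. -/
def dirSingSubdiffInfty2 {n m : ℕ} (F : Eu n × Eu m → EReal) (w : Eu n × Eu m) :
    Set (Eu n × Eu m) :=
  {ξ | ∃ (x : ℕ → Eu n × Eu m) (r : ℕ → ℝ) (v : ℕ → (Eu n × Eu m) × ℝ),
      TendstoDirInfty2 x w ∧ (∀ k, F (x k) ≤ ((r k : ℝ) : EReal)) ∧
      (∀ k, v k ∈ frechetNCT (epigraph2 F) (x k, r k)) ∧
      Tendsto v atTop (𝓝 (ξ, (0 : ℝ)))}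

section API
variable {n m : ℕ}

local notation "T" => (Eu n × Eu m) × ℝ

lemma tnorm_nonneg (q : T) : 0 ≤ tnorm q := Real.sqrt_nonneg _

lemma tnorm_arg_nonneg (q : T) : 0 ≤ ‖q.1.1‖ ^ 2 + ‖q.1.2‖ ^ 2 + q.2 ^ 2 := by positivity

lemma tnorm_sq (q : T) : tnorm q ^ 2 = ‖q.1.1‖ ^ 2 + ‖q.1.2‖ ^ 2 + q.2 ^ 2 :=
  Real.sq_sqrt (tnorm_arg_nonneg q)

lemma comp11_le_tnorm (q : T) : ‖q.1.1‖ ≤ tnorm q := by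
  rw [show ‖q.1.1‖ = Real.sqrt (‖q.1.1‖ ^ 2) from (Real.sqrt_sq (norm_nonneg _)).symm]
  exact Real.sqrt_le_sqrt (by nlinarith [sq_nonneg ‖q.1.2‖, sq_nonneg q.2])

lemma comp12_le_tnorm (q : T) : ‖q.1.2‖ ≤ tnorm q := by
  rw [show ‖q.1.2‖ = Real.sqrt (‖q.1.2‖ ^ 2) from (Real.sqrt_sq (norm_nonneg _)).symm]
  exact Real.sqrt_le_sqrt (by nlinarith [sq_nonneg ‖q.1.1‖, sq_nonneg q.2])

lemma comp2_le_tnorm (q : T) : |q.2| ≤ tnorm q := by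
  rw [show |q.2| = Real.sqrt (q.2 ^ 2) from (Real.sqrt_sq_eq_abs _).symm]
  exact Real.sqrt_le_sqrt (by nlinarith [sq_nonneg ‖q.1.1‖, sq_nonneg ‖q.1.2‖])

lemma norm_le_tnorm (q : T) : ‖q‖ ≤ tnorm q := by
  have h := comp11_le_tnorm q
  have h2 := comp12_le_tnorm q
  have h3 := comp2_le_tnorm q
  rw [Prod.norm_def, Prod.norm_def]
  simp only [Real.norm_eq_abs]
  exact max_le (max_le h h2) h3

lemma tnorm_zero : tnorm (0 : T) = 0 := by
  simp [tnorm]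

lemma tnorm_smul (c : ℝ) (q : T) : tnorm (c • q) = |c| * tnorm q := by
  unfold tnorm
  rw [show (c • q).1.1 = c • q.1.1 from rfl, show (c • q).1.2 = c • q.1.2 from rfl,
    show (c • q).2 = c * q.2 from rfl]
  rw [norm_smul, norm_smul]
  rw [show (‖c‖ * ‖q.1.1‖) ^ 2 + (‖c‖ * ‖q.1.2‖) ^ 2 + (c * q.2) ^ 2
      = c ^ 2 * (‖q.1.1‖ ^ 2 + ‖q.1.2‖ ^ 2 + q.2 ^ 2) by
    simp [Real.norm_eq_abs]; ring_nf; rw [sq_abs]; ring]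
  rw [Real.sqrt_mul (sq_nonneg c), Real.sqrt_sq_eq_abs]

lemma tinner_self (q : T) : tinner q q = tnorm q ^ 2 := by
  rw [tnorm_sq]
  unfold tinner
  rw [real_inner_self_eq_norm_sq, real_inner_self_eq_norm_sq]
  ring

lemma CS3 (x1 x2 x3 y1 y2 y3 : ℝ) :
    x1*y1+x2*y2+x3*y3 ≤ Real.sqrt (x1^2+x2^2+x3^2) * Real.sqrt (y1^2+y2^2+y3^2) := by
  have h2 : (x1*y1+x2*y2+x3*y3)^2 ≤ (x1^2+x2^2+x3^2)*(y1^2+y2^2+y3^2) := by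
    nlinarith [sq_nonneg (x1*y2-x2*y1), sq_nonneg (x1*y3-x3*y1), sq_nonneg (x2*y3-x3*y2)]
  calc x1*y1+x2*y2+x3*y3 ≤ |x1*y1+x2*y2+x3*y3| := le_abs_self _
  _ = Real.sqrt ((x1*y1+x2*y2+x3*y3)^2) := (Real.sqrt_sq_eq_abs _).symm
  _ ≤ Real.sqrt ((x1^2+x2^2+x3^2)*(y1^2+y2^2+y3^2)) := Real.sqrt_le_sqrt h2
  _ = Real.sqrt (x1^2+x2^2+x3^2) * Real.sqrt (y1^2+y2^2+y3^2) := Real.sqrt_mul (by positivity) _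

lemma tinner_le_CS (a b : T) : tinner a b ≤ tnorm a * tnorm b := by
  have h1 : ⟪a.1.1, b.1.1⟫ ≤ ‖a.1.1‖ * ‖b.1.1‖ := real_inner_le_norm _ _
  have h2 : ⟪a.1.2, b.1.2⟫ ≤ ‖a.1.2‖ * ‖b.1.2‖ := real_inner_le_norm _ _
  have h3 : a.2 * b.2 ≤ |a.2| * |b.2| := by
    calc a.2 * b.2 ≤ |a.2 * b.2| := le_abs_self _
    _ = |a.2| * |b.2| := abs_mul _ _
  have key : ‖a.1.1‖ * ‖b.1.1‖ + ‖a.1.2‖ * ‖b.1.2‖ + |a.2| * |b.2| ≤ tnorm a * tnorm b := by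
    have := CS3 ‖a.1.1‖ ‖a.1.2‖ |a.2| ‖b.1.1‖ ‖b.1.2‖ |b.2|
    unfold tnorm
    rw [sq_abs, sq_abs] at this
    exact this
  unfold tinner
  linarith

lemma tinner_add_left (a b c : T) : tinner (a + b) c = tinner a c + tinner b c := by
  unfold tinner
  rw [show (a + b).1.1 = a.1.1 + b.1.1 from rfl, show (a + b).1.2 = a.1.2 + b.1.2 from rfl,
    show (a + b).2 = a.2 + b.2 from rfl, inner_add_left, inner_add_left]
  ring

lemma tinner_sub_left (a b c : T) : tinner (a - b) c = tinner a c - tinner b c := by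
  unfold tinner
  rw [show (a - b).1.1 = a.1.1 - b.1.1 from rfl, show (a - b).1.2 = a.1.2 - b.1.2 from rfl,
    show (a - b).2 = a.2 - b.2 from rfl, inner_sub_left, inner_sub_left]
  ring

lemma tinner_smul_left (c : ℝ) (a b : T) : tinner (c • a) b = c * tinner a b := by
  unfold tinner
  rw [show (c • a).1.1 = c • a.1.1 from rfl, show (c • a).1.2 = c • a.1.2 from rfl,
    show (c • a).2 = c * a.2 from rfl, real_inner_smul_left, real_inner_smul_left]
  ring

lemma tinner_add_right (a b c : T) : tinner a (b + c) = tinner a b + tinner a c := by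
  unfold tinner
  rw [show (b + c).1.1 = b.1.1 + c.1.1 from rfl, show (b + c).1.2 = b.1.2 + c.1.2 from rfl,
    show (b + c).2 = b.2 + c.2 from rfl, inner_add_right, inner_add_right]
  ring

lemma tnorm_triangle (a b : T) : tnorm (a + b) ≤ tnorm a + tnorm b := by
  have h : tnorm (a + b) ^ 2 ≤ (tnorm a + tnorm b) ^ 2 := by
    have e : tnorm (a+b) ^2 = tnorm a ^2 + 2 * tinner a b + tnorm b ^2 := by
      rw [← tinner_self, ← tinner_self, ← tinner_self, tinner_add_left, tinner_add_right,
        tinner_add_right]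
      have : tinner b a = tinner a b := by unfold tinner; rw [real_inner_comm, real_inner_comm b.1.2]; ring
      rw [this]; ring
    have := tinner_le_CS a b
    nlinarith
  have := tnorm_nonneg (a + b)
  have h2 : 0 ≤ tnorm a + tnorm b := add_nonneg (tnorm_nonneg a) (tnorm_nonneg b)
  nlinarith

lemma tnorm_continuous : Continuous fun q : T => tnorm q := by
  unfold tnorm
  fun_prop

end API
section API2
variable {n m : ℕ}

local notation "T" => (Eu n × Eu m) × ℝ

lemma pnorm2_eq_tnorm (X : Eu n × Eu m) : pnorm2 X = tnorm ((X, 0) : T) := by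
  unfold pnorm2 tnorm
  norm_num

lemma pnorm2_nonneg (X : Eu n × Eu m) : 0 ≤ pnorm2 X := Real.sqrt_nonneg _

lemma norm_le_pnorm2 (X : Eu n × Eu m) : ‖X‖ ≤ pnorm2 X := by
  rw [pnorm2_eq_tnorm]
  calc ‖X‖ = max ‖X.1‖ ‖X.2‖ := rfl
  _ = ‖((X, (0:ℝ)) : T).1‖ := rfl
  _ ≤ _ := by
      rw [Prod.norm_def] at *
      refine max_le (le_trans ?_ (comp11_le_tnorm ((X, (0:ℝ)) : T)))
        (le_trans ?_ (comp12_le_tnorm ((X, (0:ℝ)) : T))) <;> simp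

lemma comp1_le_pnorm2 (X : Eu n × Eu m) : ‖X.1‖ ≤ pnorm2 X := by
  rw [pnorm2_eq_tnorm]; exact comp11_le_tnorm ((X, (0:ℝ)) : T)

lemma comp2_le_pnorm2 (X : Eu n × Eu m) : ‖X.2‖ ≤ pnorm2 X := by
  rw [pnorm2_eq_tnorm]; exact comp12_le_tnorm ((X, (0:ℝ)) : T)

lemma pnorm2_triangle (A B : Eu n × Eu m) : pnorm2 (A + B) ≤ pnorm2 A + pnorm2 B := by
  rw [pnorm2_eq_tnorm, pnorm2_eq_tnorm, pnorm2_eq_tnorm]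
  have := tnorm_triangle ((A, (0:ℝ)) : T) ((B, (0:ℝ)) : T)
  convert this using 3
  all_goals simp

lemma pnorm2_neg (A : Eu n × Eu m) : pnorm2 (-A) = pnorm2 A := by
  unfold pnorm2
  rw [show (-A).1 = -A.1 from rfl, show (-A).2 = -A.2 from rfl, norm_neg, norm_neg]

lemma pnorm2_sub_le (A B C : Eu n × Eu m) : pnorm2 (A - C) ≤ pnorm2 (A - B) + pnorm2 (B - C) := by
  have := pnorm2_triangle (A - B) (B - C)
  simpa using this

lemma abs_pnorm2_sub_le (A B : Eu n × Eu m) : |pnorm2 A - pnorm2 B| ≤ pnorm2 (A - B) := by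
  rw [abs_le]
  constructor
  · have := pnorm2_triangle (A - B) A
    have h2 := pnorm2_neg (A - B)
    have := pnorm2_triangle (B - A) A
    simp only [sub_add_cancel] at this
    rw [neg_sub] at h2
    linarith
  · have := pnorm2_triangle (A - B) B
    simp only [sub_add_cancel] at this
    linarith

/-- the epigraph of a lsc function is closed -/
lemma isClosed_epigraph2 {F : Eu n × Eu m → EReal} (hF : LowerSemicontinuous F) :
    IsClosed (epigraph2 F) := by
  rw [← isOpen_compl_iff, isOpen_iff_mem_nhds]
  intro p hp
  simp only [mem_compl_iff, epigraph2, Set.mem_setOf_eq, not_le] at hp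
  obtain ⟨z, hz1, hz2⟩ := exists_between hp
  have hzt : z ≠ ⊤ := by
    intro h; rw [h] at hz2; exact (not_top_lt hz2).elim
  have hzb : z ≠ ⊥ := by
    intro h; rw [h] at hz1; exact (not_lt_bot hz1).elim
  have hzr : z = ((z.toReal : ℝ) : EReal) := (EReal.coe_toReal hzt hzb).symm
  have ev1 : ∀ᶠ x' in 𝓝 p.1, z < F x' := hF p.1 z hz2
  have ev1' : ∀ᶠ p' in 𝓝 p, z < F p'.1 := (continuous_fst.tendsto p).eventually ev1
  have ev2 : ∀ᶠ p' in (𝓝 p : Filter T), p'.2 < z.toReal := by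
    have hopen : IsOpen {p' : T | p'.2 < z.toReal} := isOpen_lt continuous_snd continuous_const
    refine hopen.mem_nhds ?_
    simp only [Set.mem_setOf_eq]
    have : (p.2 : EReal) < ((z.toReal : ℝ) : EReal) := hzr ▸ hz1
    exact_mod_cast this
  filter_upwards [ev1', ev2] with p' h1 h2
  simp only [mem_compl_iff, epigraph2, Set.mem_setOf_eq, not_le]
  calc (p'.2 : EReal) < ((z.toReal : ℝ) : EReal) := by exact_mod_cast h2
  _ = z := hzr.symm
  _ < F p'.1 := h1

/-- scaling normals -/
lemma frechetNCT_smul {S : Set T} {q w : T} (c : ℝ) (hc : 0 ≤ c)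
    (hw : w ∈ frechetNCT S q) : c • w ∈ frechetNCT S q := by
  obtain ⟨hq, hw⟩ := hw
  refine ⟨hq, fun ε hε => ?_⟩
  rcases eq_or_lt_of_le hc with h0 | hc
  · refine ⟨1, one_pos, fun p hp _ => ?_⟩
    rw [← h0, zero_smul]
    have h1 : tinner (0 : (Eu n × Eu m) × ℝ) (p - q) = 0 := by
      simp [tinner]
    rw [h1]
    exact mul_nonneg (le_of_lt hε) (tnorm_nonneg (p - q))
  · obtain ⟨δ, hδ, hδ2⟩ := hw (ε / c) (by positivity)
    refine ⟨δ, hδ, fun p hp hpd => ?_⟩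
    rw [tinner_smul_left]
    have := hδ2 p hp hpd
    calc c * tinner w (p - q) ≤ c * (ε / c * tnorm (p - q)) := by
          exact mul_le_mul_of_nonneg_left this (le_of_lt hc)
    _ = ε * tnorm (p - q) := by field_simp
end API2
section API3
set_option maxHeartbeats 1000000
variable {n m : ℕ}

local notation "T" => (Eu n × Eu m) × ℝ

lemma tinner_comm (a b : T) : tinner a b = tinner b a := by
  unfold tinner
  rw [real_inner_comm, real_inner_comm a.1.2]
  ring

lemma tinner_zero_right (a : T) : tinner a 0 = 0 := by simp [tinner]

lemma tinner_special (ξ : Eu n) (s : ℝ) (v : T) :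
    tinner ((ξ, (0 : Eu m)), s) v ≤ (‖ξ‖ + |s|) * tnorm v := by
  unfold tinner
  have h1 : ⟪ξ, v.1.1⟫ ≤ ‖ξ‖ * tnorm v := by
    calc ⟪ξ, v.1.1⟫ ≤ ‖ξ‖ * ‖v.1.1‖ := real_inner_le_norm _ _
    _ ≤ ‖ξ‖ * tnorm v := mul_le_mul_of_nonneg_left (comp11_le_tnorm v) (norm_nonneg _)
  have h2 : ⟪(0 : Eu m), v.1.2⟫ = 0 := inner_zero_left _
  have h3 : s * v.2 ≤ |s| * tnorm v := by
    calc s * v.2 ≤ |s * v.2| := le_abs_self _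
    _ = |s| * |v.2| := abs_mul _ _
    _ ≤ |s| * tnorm v := mul_le_mul_of_nonneg_left (comp2_le_tnorm v) (abs_nonneg _)
  show ⟪((ξ, (0 : Eu m)), s).1.1, v.1.1⟫ + ⟪((ξ, (0 : Eu m)), s).1.2, v.1.2⟫
      + ((ξ, (0 : Eu m)), s).2 * v.2 ≤ (‖ξ‖ + |s|) * tnorm v
  simp only []
  rw [h2]
  linarith

/-- The workhorse: lifting an approximate normal from the slice to the full epigraph. -/
lemma lemA {F : Eu n × Eu m → EReal} (hcl : IsClosed (epigraph2 F))
    (yb : Eu m) (qb : T) (hqb : qb ∈ epigraph2 F) (hy : qb.1.2 = yb)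
    (ξ : Eu n) (s : ℝ)
    (hyp : ∀ ε > 0, ∃ δ > 0, ∀ p ∈ epigraph2 F, p.1.2 = yb → tnorm (p - qb) < δ →
      tinner ((ξ, (0 : Eu m)), s) (p - qb) ≤ ε * tnorm (p - qb))
    (ε : ℝ) (hε : 0 < ε) :
    ∃ q' ∈ epigraph2 F, ∃ w' ∈ frechetNCT (epigraph2 F) q',
      tnorm (q' - qb) < ε ∧ ‖w'.1.1 - ξ‖ < ε ∧ |w'.2 - s| < ε := by
  set w : T := ((ξ, (0 : Eu m)), s) with hw_def
  set M : ℝ := ‖ξ‖ + |s| with hM_def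
  have hM : 0 ≤ M := by positivity
  set ε₀ : ℝ := min (ε ^ 2 / 64) (1 / 64) with hε₀_def
  have hε₀ : 0 < ε₀ := lt_min (by positivity) (by norm_num)
  obtain ⟨δ, hδpos, hδ⟩ := hyp ε₀ hε₀
  set ρ : ℝ := min (δ / 2) (ε / 2) with hρ_def
  have hρ : 0 < ρ := lt_min (by linarith) (by linarith)
  have hρδ : ρ < δ := lt_of_le_of_lt (min_le_left _ _) (by linarith)
  have hρε : ρ ≤ ε / 2 := min_le_right _ _
  set c : ℝ := ρ⁻¹ with hc_def
  have hc : 0 < c := inv_pos.mpr hρ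
  have hcρ : c * ρ = 1 := inv_mul_cancel₀ (ne_of_gt hρ)
  set K : Set T := epigraph2 F ∩ {p | tnorm (p - qb) ≤ ρ} with hK_def
  -- compactness of K
  have hKclosed : IsClosed K := by
    refine hcl.inter (isClosed_le ?_ continuous_const)
    exact tnorm_continuous.comp (continuous_id.sub continuous_const)
  have hKc : IsCompact K := by
    refine (isCompact_closedBall qb ρ).of_isClosed_subset hKclosed ?_
    intro p hp
    rw [Metric.mem_closedBall, dist_eq_norm]
    exact le_trans (norm_le_tnorm _) hp.2
  have hqbK : qb ∈ K := by
    refine ⟨hqb, ?_⟩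
    simp only [Set.mem_setOf_eq, sub_self, tnorm_zero]
    exact le_of_lt hρ
  -- the penalized functions
  set ψ : ℕ → T → ℝ := fun k p =>
    -(tinner w (p - qb)) + (k : ℝ) * ‖p.1.2 - yb‖ ^ 2 + c * tnorm (p - qb) ^ 2 with hψ_def
  have hsubc : Continuous fun p : T => p - qb := continuous_id.sub continuous_const
  have h1cont : Continuous fun p : T => tinner w (p - qb) := by
    unfold tinner
    exact ((continuous_const.inner hsubc.fst.fst).add
      (continuous_const.inner hsubc.fst.snd)).add (continuous_const.mul hsubc.snd)
  have h2cont : Continuous fun p : T => ‖p.1.2 - yb‖ ^ 2 := by fun_prop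
  have h3cont : Continuous fun p : T => tnorm (p - qb) :=
    tnorm_continuous.comp (continuous_id.sub continuous_const)
  have hψcont : ∀ k, Continuous (ψ k) := fun k =>
    (h1cont.neg.add (continuous_const.mul h2cont)).add (continuous_const.mul (h3cont.pow 2))
  have hmin : ∀ k : ℕ, ∃ p ∈ K, IsMinOn (ψ k) K p := fun k =>
    hKc.exists_isMinOn ⟨qb, hqbK⟩ (hψcont k).continuousOn
  choose P hPK hPmin using hmin
  have hψqb : ∀ k, ψ k qb = 0 := by
    intro k
    simp only [hψ_def, sub_self, tnorm_zero, tinner_zero_right, hy]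
    simp
  have hψ0 : ∀ k, ψ k (P k) ≤ 0 := by
    intro k
    have := isMinOn_iff.mp (hPmin k) qb hqbK
    rw [hψqb k] at this
    exact this
  have htnP : ∀ k, tnorm (P k - qb) ≤ ρ := fun k => (hPK k).2
  have hbound : ∀ k, tinner w (P k - qb) ≤ M * ρ := by
    intro k
    calc tinner w (P k - qb) ≤ M * tnorm (P k - qb) := tinner_special ξ s _
    _ ≤ M * ρ := mul_le_mul_of_nonneg_left (htnP k) hM
  have henergy : ∀ k : ℕ, (k : ℝ) * ‖(P k).1.2 - yb‖ ^ 2 ≤ M * ρ := by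
    intro k
    have h0 := hψ0 k
    have hcn : 0 ≤ c * tnorm (P k - qb) ^ 2 := by positivity
    have := hbound k
    simp only [hψ_def] at h0
    linarith
  -- the y-components go to yb
  have hysq : Tendsto (fun k => ‖(P k).1.2 - yb‖ ^ 2) atTop (𝓝 0) := by
    apply squeeze_zero' (Eventually.of_forall fun k => by positivity)
      (g := fun k : ℕ => M * ρ * (k : ℝ)⁻¹)
    · filter_upwards [eventually_ge_atTop 1] with k hk
      have hkpos : (0 : ℝ) < (k : ℝ) := by exact_mod_cast hk
      have hle : ‖(P k).1.2 - yb‖ ^ 2 ≤ M * ρ / (k:ℝ) := by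
        rw [le_div_iff₀ hkpos]
        nlinarith [henergy k]
      calc ‖(P k).1.2 - yb‖ ^ 2 ≤ M * ρ / (k:ℝ) := hle
      _ = M * ρ * (k:ℝ)⁻¹ := by rw [div_eq_mul_inv]
    · have : Tendsto (fun k : ℕ => ((k : ℝ))⁻¹) atTop (𝓝 0) :=
        tendsto_inv_atTop_zero.comp tendsto_natCast_atTop_atTop
      have := this.const_mul (M * ρ)
      simpa using this
  -- convergent subsequence
  obtain ⟨phat, hphatK, φ, hφmono, hφtend⟩ := hKc.tendsto_subseq hPK
  have hphat_y : phat.1.2 = yb := by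
    have t1 : Tendsto (fun j => ‖(P (φ j)).1.2 - yb‖ ^ 2) atTop (𝓝 (‖phat.1.2 - yb‖ ^ 2)) :=
      (h2cont.tendsto phat).comp hφtend
    have t2 : Tendsto (fun j => ‖(P (φ j)).1.2 - yb‖ ^ 2) atTop (𝓝 0) :=
      hysq.comp hφmono.tendsto_atTop
    have := tendsto_nhds_unique t1 t2
    have h2 : ‖phat.1.2 - yb‖ = 0 := by
      have := sq_eq_zero_iff.mp this
      exact this
    rw [norm_eq_zero, sub_eq_zero] at h2
    exact h2
  have hphat_small : tinner w (phat - qb) ≤ ε₀ * ρ := by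
    have h1 : tinner w (phat - qb) ≤ ε₀ * tnorm (phat - qb) :=
      hδ phat hphatK.1 hphat_y (lt_of_le_of_lt hphatK.2 hρδ)
    calc tinner w (phat - qb) ≤ ε₀ * tnorm (phat - qb) := h1
    _ ≤ ε₀ * ρ := mul_le_mul_of_nonneg_left hphatK.2 (le_of_lt hε₀)
  have htin : Tendsto (fun j => tinner w (P (φ j) - qb)) atTop (𝓝 (tinner w (phat - qb))) :=
    (h1cont.tendsto phat).comp hφtend
  have hev : ∀ᶠ j in atTop, tinner w (P (φ j) - qb) < 2 * ε₀ * ρ := by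
    apply htin.eventually_lt_const
    have : 0 < ε₀ * ρ := mul_pos hε₀ hρ
    linarith
  obtain ⟨j, hj⟩ := hev.exists
  set p : T := P (φ j) with hp_def
  set K0 : ℕ := φ j with hK0_def
  have hpF : p ∈ epigraph2 F := (hPK K0).1
  have hpB : tnorm (p - qb) ≤ ρ := (hPK K0).2
  have hpmin : IsMinOn (ψ K0) K p := hPmin K0
  -- smallness of tnorm (p - qb)
  have hd2 : c * tnorm (p - qb) ^ 2 < 2 * ε₀ * ρ := by
    have h0 := hψ0 K0
    have hkn : 0 ≤ (K0 : ℝ) * ‖p.1.2 - yb‖ ^ 2 := by positivity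
    simp only [hψ_def] at h0
    have : c * tnorm (p - qb) ^ 2 ≤ tinner w (p - qb) := by linarith
    exact lt_of_le_of_lt this hj
  have hdsq : tnorm (p - qb) ^ 2 < 2 * ε₀ * ρ ^ 2 := by
    have := hd2
    rw [hc_def] at this
    calc tnorm (p - qb) ^ 2 = ρ * (ρ⁻¹ * tnorm (p - qb) ^ 2) := by
          field_simp
    _ < ρ * (2 * ε₀ * ρ) := by
          exact mul_lt_mul_of_pos_left this hρ
    _ = 2 * ε₀ * ρ ^ 2 := by ring
  have hlt_ρ : tnorm (p - qb) < ρ := by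
    have h1 : tnorm (p - qb) ^ 2 < ρ ^ 2 := by
      have : 2 * ε₀ ≤ 1 := by
        have := min_le_right (ε ^ 2 / 64) ((1:ℝ) / 64)
        rw [← hε₀_def] at this
        linarith
      nlinarith [sq_nonneg ρ]
    exact lt_of_pow_lt_pow_left₀ 2 (le_of_lt hρ) h1
  have h2c : 2 * c * tnorm (p - qb) < ε := by
    have h1 : (2 * c * tnorm (p - qb)) ^ 2 < ε ^ 2 := by
      have he : ε₀ ≤ ε ^ 2 / 64 := min_le_left _ _
      have : (2 * c * tnorm (p - qb)) ^ 2 = 4 * c ^ 2 * tnorm (p - qb) ^ 2 := by ring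
      rw [this]
      calc 4 * c ^ 2 * tnorm (p - qb) ^ 2 < 4 * c ^ 2 * (2 * ε₀ * ρ ^ 2) := by
            apply mul_lt_mul_of_pos_left hdsq
            positivity
      _ = 8 * ε₀ * (c * ρ) ^ 2 := by ring
      _ = 8 * ε₀ := by rw [hcρ]; ring
      _ ≤ 8 * (ε ^ 2 / 64) := by linarith
      _ < ε ^ 2 := by nlinarith
    exact lt_of_pow_lt_pow_left₀ 2 (le_of_lt hε) h1
  -- the lifted normal vector
  set E : T := (((0 : Eu n), p.1.2 - yb), (0 : ℝ)) with hE_def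
  set w' : T := w - ((2 : ℝ) * (K0 : ℝ)) • E - (2 * c) • (p - qb) with hw'_def
  -- key quadratic estimate
  have hkey : ∀ p' ∈ epigraph2 F, tnorm (p' - p) < ρ - tnorm (p - qb) →
      tinner w' (p' - p) ≤ ((K0 : ℝ) + c) * tnorm (p' - p) ^ 2 := by
    intro p' hp'F hp'd
    set v : T := p' - p with hv_def
    set d : T := p - qb with hd_def
    have hvd : p' - qb = v + d := by
      rw [hv_def, hd_def]; abel
    have hp'K : p' ∈ K := by
      refine ⟨hp'F, ?_⟩
      simp only [Set.mem_setOf_eq]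
      calc tnorm (p' - qb) = tnorm (v + d) := by rw [hvd]
      _ ≤ tnorm v + tnorm d := tnorm_triangle v d
      _ ≤ ρ := by linarith
    have hmin2 : ψ K0 p ≤ ψ K0 p' := isMinOn_iff.mp hpmin p' hp'K
    have hy' : p'.1.2 - yb = v.1.2 + (p.1.2 - yb) := by
      rw [hv_def]
      show p'.1.2 - yb = (p'.1.2 - p.1.2) + (p.1.2 - yb)
      abel
    have hexp1 : tinner w (p' - qb) = tinner w v + tinner w d := by
      rw [hvd, tinner_add_right]
    have hexp2 : ‖p'.1.2 - yb‖ ^ 2 = ‖v.1.2‖ ^ 2 + 2 * ⟪v.1.2, p.1.2 - yb⟫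
        + ‖p.1.2 - yb‖ ^ 2 := by
      rw [hy']
      rw [@norm_add_sq_real]
    have hexp3 : tnorm (p' - qb) ^ 2 = tnorm v ^ 2 + 2 * tinner v d + tnorm d ^ 2 := by
      rw [hvd, ← tinner_self, ← tinner_self, ← tinner_self, tinner_add_left,
        tinner_add_right, tinner_add_right, tinner_comm d v]
      ring
    have hexpand : 0 ≤ -(tinner w v) + (K0 : ℝ) * (2 * ⟪v.1.2, p.1.2 - yb⟫ + ‖v.1.2‖ ^ 2)
        + c * (2 * tinner v d + tnorm v ^ 2) := by
      simp only [hψ_def] at hmin2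
      rw [hexp1, hexp2, hexp3] at hmin2
      have := hmin2
      nlinarith [this]
    have hEv : tinner E v = ⟪v.1.2, p.1.2 - yb⟫ := by
      show ⟪(0 : Eu n), v.1.1⟫ + ⟪p.1.2 - yb, v.1.2⟫ + (0 : ℝ) * v.2 = _
      rw [inner_zero_left, real_inner_comm]
      ring
    have hw'v : tinner w' v = tinner w v - 2 * (K0 : ℝ) * ⟪v.1.2, p.1.2 - yb⟫
        - 2 * c * tinner v d := by
      rw [hw'_def, tinner_sub_left, tinner_sub_left, tinner_smul_left, tinner_smul_left,
        hEv, tinner_comm d v]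
    have hcomp : ‖v.1.2‖ ^ 2 ≤ tnorm v ^ 2 :=
      pow_le_pow_left₀ (norm_nonneg _) (comp12_le_tnorm v) 2
    rw [hw'v]
    have hK0n : (0 : ℝ) ≤ (K0 : ℝ) := Nat.cast_nonneg _
    have hK0comp : (K0 : ℝ) * ‖v.1.2‖ ^ 2 ≤ (K0 : ℝ) * tnorm v ^ 2 :=
      mul_le_mul_of_nonneg_left hcomp hK0n
    linarith [hexpand, hK0comp]
  have hw'NC : w' ∈ frechetNCT (epigraph2 F) p := by
    refine ⟨hpF, fun ε' hε' => ?_⟩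
    refine ⟨min (ρ - tnorm (p - qb)) (ε' / ((K0 : ℝ) + c + 1)), ?_, ?_⟩
    · apply lt_min (by linarith)
      positivity
    · intro p' hp' hp'd
      have hd1 : tnorm (p' - p) < ρ - tnorm (p - qb) :=
        lt_of_lt_of_le hp'd (min_le_left _ _)
      have hd2' : tnorm (p' - p) < ε' / ((K0 : ℝ) + c + 1) :=
        lt_of_lt_of_le hp'd (min_le_right _ _)
      have h := hkey p' hp' hd1
      have ht0 : 0 ≤ tnorm (p' - p) := tnorm_nonneg _
      have hKc0 : (0:ℝ) < (K0 : ℝ) + c + 1 := by positivity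
      have h2 : ((K0 : ℝ) + c) * tnorm (p' - p) ≤ ε' := by
        have h3 : ((K0 : ℝ) + c + 1) * tnorm (p' - p) < ε' := by
          rw [div_eq_inv_mul] at hd2'
          calc ((K0 : ℝ) + c + 1) * tnorm (p' - p)
              < ((K0 : ℝ) + c + 1) * (((K0 : ℝ) + c + 1)⁻¹ * ε') := by
                exact mul_lt_mul_of_pos_left hd2' hKc0
          _ = ε' := by field_simp
        nlinarith
      calc tinner w' (p' - p) ≤ ((K0 : ℝ) + c) * tnorm (p' - p) ^ 2 := h
      _ = (((K0 : ℝ) + c) * tnorm (p' - p)) * tnorm (p' - p) := by ring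
      _ ≤ ε' * tnorm (p' - p) := mul_le_mul_of_nonneg_right h2 ht0
  refine ⟨p, hpF, w', hw'NC, ?_, ?_, ?_⟩
  · calc tnorm (p - qb) < ρ := hlt_ρ
    _ ≤ ε / 2 := hρε
    _ < ε := by linarith
  · have h11 : w'.1.1 - ξ = -((2 * c) • (p - qb).1.1) := by
      simp only [hw'_def, hE_def, hw_def]
      show (ξ - (2 * (K0:ℝ)) • (0 : Eu n) - (2 * c) • (p - qb).1.1) - ξ
          = -((2 * c) • (p - qb).1.1)
      rw [smul_zero]
      abel
    rw [h11, norm_neg, norm_smul]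
    have : ‖(2 * c : ℝ)‖ = 2 * c := by
      rw [Real.norm_eq_abs, abs_of_pos (by positivity)]
    rw [this]
    calc 2 * c * ‖(p - qb).1.1‖ ≤ 2 * c * tnorm (p - qb) := by
          apply mul_le_mul_of_nonneg_left (comp11_le_tnorm _) (by positivity)
    _ < ε := h2c
  · have h2' : w'.2 - s = -(2 * c * (p - qb).2) := by
      simp only [hw'_def, hE_def, hw_def]
      show (s - (2 * (K0:ℝ)) * 0 - (2 * c) * (p - qb).2) - s = -(2 * c * (p - qb).2)
      ring
    rw [h2', abs_neg, abs_mul]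
    have : |(2 * c : ℝ)| = 2 * c := abs_of_pos (by positivity)
    rw [this]
    calc 2 * c * |(p - qb).2| ≤ 2 * c * tnorm (p - qb) := by
          apply mul_le_mul_of_nonneg_left (comp2_le_tnorm _) (by positivity)
    _ < ε := h2c

end API3
section API4
set_option maxHeartbeats 1000000
variable {n m : ℕ}

lemma tendsto_of_norm_sub {E : Type*} [NormedAddCommGroup E] {f g : ℕ → E} {a : E}
    (hg : Tendsto g atTop (𝓝 a)) (h : Tendsto (fun k => ‖f k - g k‖) atTop (𝓝 0)) :
    Tendsto f atTop (𝓝 a) := by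
  have h2 : Tendsto (fun k => f k - g k) atTop (𝓝 0) :=
    tendsto_zero_iff_norm_tendsto_zero.mpr h
  have := hg.add h2
  rw [add_zero] at this
  convert this using 2 with k
  abel

lemma pnorm2_fst (x : Eu n) : pnorm2 ((x, (0 : Eu m))) = ‖x‖ := by
  unfold pnorm2
  simp [Real.sqrt_sq (norm_nonneg x)]

lemma pnorm2_snd (y : Eu m) : pnorm2 (((0 : Eu n), y)) = ‖y‖ := by
  unfold pnorm2
  simp [Real.sqrt_sq (norm_nonneg y)]

lemma dirinfty2_subseq {x : ℕ → Eu n × Eu m} {W : Eu n × Eu m} (h : TendstoDirInfty2 x W)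
    {φ : ℕ → ℕ} (hφ : StrictMono φ) : TendstoDirInfty2 (fun j => x (φ j)) W :=
  ⟨h.1.comp hφ.tendsto_atTop, h.2.comp hφ.tendsto_atTop⟩

/-- lifting a direction to the product -/
lemma base_lift {x : ℕ → Eu n} {u : Eu n} (h : TendstoDirInfty x u) (yb : Eu m) :
    TendstoDirInfty2 (fun k => ((x k, yb) : Eu n × Eu m)) (u, (0 : Eu m)) := by
  set a : ℕ → ℝ := fun k => pnorm2 ((x k, yb) : Eu n × Eu m) with ha_def
  have hax : ∀ k, ‖x k‖ ≤ a k := by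
    intro k
    have := comp1_le_pnorm2 ((x k, yb) : Eu n × Eu m)
    simpa using this
  have haub : ∀ k, a k ≤ ‖x k‖ + ‖yb‖ := by
    intro k
    have := pnorm2_triangle ((x k, (0 : Eu m))) (((0 : Eu n), yb))
    rw [pnorm2_fst, pnorm2_snd] at this
    have he : ((x k, (0 : Eu m)) : Eu n × Eu m) + ((0 : Eu n), yb) = (x k, yb) := by
      rw [Prod.mk_add_mk, add_zero, zero_add]
    rw [he] at this
    exact this
  have part1 : Tendsto a atTop atTop := tendsto_atTop_mono hax h.1
  have hk1 : ∀ᶠ k in atTop, 1 ≤ ‖x k‖ := h.1.eventually_ge_atTop 1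
  -- ratio tends to 1
  have hf : Tendsto (fun k => ‖x k‖ / (‖x k‖ + ‖yb‖)) atTop (𝓝 1) := by
    have h0 : Tendsto (fun k => ‖x k‖⁻¹) atTop (𝓝 0) :=
      tendsto_inv_atTop_zero.comp h.1
    have h1 : Tendsto (fun k => 1 + ‖yb‖ * ‖x k‖⁻¹) atTop (𝓝 1) := by
      have := (h0.const_mul ‖yb‖).const_add 1
      simpa using this
    have h2 : Tendsto (fun k => (1 + ‖yb‖ * ‖x k‖⁻¹)⁻¹) atTop (𝓝 1) := by
      have := h1.inv₀ one_ne_zero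
      simpa using this
    apply h2.congr'
    filter_upwards [hk1] with k hk
    have hx0 : (0:ℝ) < ‖x k‖ := by linarith
    field_simp
  have hr : Tendsto (fun k => ‖x k‖ / a k) atTop (𝓝 1) := by
    apply tendsto_of_tendsto_of_tendsto_of_le_of_le' hf tendsto_const_nhds
    · filter_upwards [hk1] with k hk
      have ha0 : (0:ℝ) < a k := lt_of_lt_of_le (by linarith) (hax k)
      exact div_le_div_of_nonneg_left (norm_nonneg _) ha0 (haub k)
    · filter_upwards [hk1] with k hk
      have ha0 : (0:ℝ) < a k := lt_of_lt_of_le (by linarith) (hax k)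
      rw [div_le_one ha0]
      exact hax k
  constructor
  · exact part1
  · have hfst : Tendsto (fun k => (a k)⁻¹ • x k) atTop (𝓝 u) := by
      have hm : Tendsto (fun k => (‖x k‖ / a k) • (‖x k‖⁻¹ • x k)) atTop (𝓝 ((1:ℝ) • u)) :=
        hr.smul h.2
      rw [one_smul] at hm
      apply hm.congr'
      filter_upwards [hk1] with k hk
      have hx0 : (0:ℝ) < ‖x k‖ := by linarith
      have ha0 : (0:ℝ) < a k := lt_of_lt_of_le (by linarith) (hax k)
      rw [smul_smul]
      congr 1
      field_simp
  -- second component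
    have hsnd : Tendsto (fun k => (a k)⁻¹ • yb) atTop (𝓝 (0 : Eu m)) := by
      have hainv : Tendsto (fun k => (a k)⁻¹) atTop (𝓝 0) :=
        tendsto_inv_atTop_zero.comp part1
      have := hainv.smul_const yb
      simpa using this
    exact hfst.prodMk_nhds hsnd

/-- perturbation of sequences going to infinity in a direction -/
lemma dirinfty2_perturb {b x2 : ℕ → Eu n × Eu m} {W : Eu n × Eu m}
    (hb : TendstoDirInfty2 b W)
    (he : Tendsto (fun k => pnorm2 (x2 k - b k)) atTop (𝓝 0)) : TendstoDirInfty2 x2 W := by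
  set a : ℕ → ℝ := fun k => pnorm2 (b k) with ha_def
  set a2 : ℕ → ℝ := fun k => pnorm2 (x2 k) with ha2_def
  set e : ℕ → ℝ := fun k => pnorm2 (x2 k - b k) with he_def
  have habs : ∀ k, |a2 k - a k| ≤ e k := fun k => abs_pnorm2_sub_le (x2 k) (b k)
  have part1 : Tendsto a2 atTop atTop := by
    have hsum : Tendsto (fun k => a k + (- e k)) atTop atTop :=
      hb.1.atTop_add he.neg
    apply tendsto_atTop_mono _ hsum
    intro k
    have := abs_le.mp (habs k)
    linarith [this.1]
  have hev : ∀ᶠ k in atTop, 1 ≤ a k ∧ e k ≤ 1 ∧ 1 ≤ a2 k := by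
    have h1 : ∀ᶠ k in atTop, 2 ≤ a k := hb.1.eventually_ge_atTop 2
    have h2 : ∀ᶠ k in atTop, e k ≤ 1 := by
      have : ∀ᶠ k in atTop, e k < 1 := by
        apply he.eventually_lt_const
        norm_num
      filter_upwards [this] with k hk using le_of_lt hk
    filter_upwards [h1, h2] with k hk1 hk2
    have := abs_le.mp (habs k)
    exact ⟨by linarith, hk2, by linarith [this.1]⟩
  constructor
  · exact part1
  · have key : Tendsto (fun k => (a2 k)⁻¹ • x2 k - (a k)⁻¹ • b k) atTop (𝓝 0) := by
      have hg0 : Tendsto (fun k => 2 * e k * (a2 k)⁻¹) atTop (𝓝 0) := by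
        have h2 : Tendsto (fun k => (a2 k)⁻¹) atTop (𝓝 0) :=
          tendsto_inv_atTop_zero.comp part1
        have := (he.const_mul 2).mul h2
        simpa using this
      refine squeeze_zero_norm' ?_ hg0
      · filter_upwards [hev] with k hk
        obtain ⟨hka, hke, hka2⟩ := hk
        have ha0 : (0:ℝ) < a k := by linarith
        have ha20 : (0:ℝ) < a2 k := by linarith
        have hsplit : (a2 k)⁻¹ • x2 k - (a k)⁻¹ • b k
            = (a2 k)⁻¹ • (x2 k - b k) + ((a2 k)⁻¹ - (a k)⁻¹) • b k := by
          rw [smul_sub, sub_smul]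
          abel
        have he0 : 0 ≤ e k := pnorm2_nonneg _
        have hxb : ‖x2 k - b k‖ ≤ e k := norm_le_pnorm2 _
        have hbk : ‖b k‖ ≤ a k := norm_le_pnorm2 _
        have hdiff : (a2 k)⁻¹ - (a k)⁻¹ = (a k - a2 k) / (a k * a2 k) := by
          rw [eq_div_iff (by positivity : (0:ℝ) < a k * a2 k).ne']
          field_simp
        have habs2 : |(a2 k)⁻¹ - (a k)⁻¹| ≤ e k / (a k * a2 k) := by
          have hpos : (0:ℝ) < a k * a2 k := mul_pos ha0 ha20
          rw [hdiff, abs_div, abs_of_pos hpos, div_le_div_iff_of_pos_right hpos, abs_sub_comm]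
          exact habs k
        calc ‖(a2 k)⁻¹ • x2 k - (a k)⁻¹ • b k‖
            = ‖(a2 k)⁻¹ • (x2 k - b k) + ((a2 k)⁻¹ - (a k)⁻¹) • b k‖ := by rw [hsplit]
        _ ≤ ‖(a2 k)⁻¹ • (x2 k - b k)‖ + ‖((a2 k)⁻¹ - (a k)⁻¹) • b k‖ := norm_add_le _ _
        _ = |(a2 k)⁻¹| * ‖x2 k - b k‖ + |(a2 k)⁻¹ - (a k)⁻¹| * ‖b k‖ := by
              rw [norm_smul, norm_smul, Real.norm_eq_abs, Real.norm_eq_abs]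
        _ ≤ (a2 k)⁻¹ * e k + (e k / (a k * a2 k)) * a k := by
              apply add_le_add
              · rw [abs_of_pos (by positivity)]
                exact mul_le_mul_of_nonneg_left hxb (by positivity)
              · exact mul_le_mul habs2 hbk (norm_nonneg _) (by positivity)
        _ = 2 * e k * (a2 k)⁻¹ := by field_simp; ring
    have hsum := hb.2.add key
    rw [add_zero] at hsum
    apply hsum.congr
    intro k
    abel
end API4
section API5
set_option maxHeartbeats 2000000
variable {n m : ℕ}

lemma pnorm2_fst_le_tnorm (q : (Eu n × Eu m) × ℝ) : pnorm2 q.1 ≤ tnorm q := by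
  unfold pnorm2 tnorm
  apply Real.sqrt_le_sqrt
  nlinarith [sq_nonneg q.2]

lemma main_aux {F : Eu n × Eu m → EReal} (hF : LowerSemicontinuous F)
    (yb : Eu m) (u : Eu n)
    (hqc : ∀ η : Eu m, ((0 : Eu n), η) ∈ dirSingSubdiffInfty2 F (u, (0 : Eu m)) → η = 0)
    (ξ : Eu n) (L : ℝ)
    (x : ℕ → Eu n) (r : ℕ → ℝ) (w : ℕ → Eu n × ℝ)
    (hdir : TendstoDirInfty x u)
    (hr : ∀ k, F (x k, yb) ≤ ((r k : ℝ) : EReal))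
    (hw : ∀ k, w k ∈ frechetNCP (epigraph fun z => F (z, yb)) (x k, r k))
    (hlim : Tendsto w atTop (𝓝 (ξ, L))) :
    ∃ η : Eu m, ∃ (x2 : ℕ → Eu n × Eu m) (r2 : ℕ → ℝ) (v2 : ℕ → (Eu n × Eu m) × ℝ),
      TendstoDirInfty2 x2 (u, (0 : Eu m)) ∧ (∀ k, F (x2 k) ≤ ((r2 k : ℝ) : EReal)) ∧
      (∀ k, v2 k ∈ frechetNCT (epigraph2 F) (x2 k, r2 k)) ∧
      Tendsto v2 atTop (𝓝 ((ξ, η), L)) := by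
  have hcl := isClosed_epigraph2 hF
  -- apply the workhorse lemma at each k
  have happ : ∀ k : ℕ, ∃ q' ∈ epigraph2 F, ∃ w' ∈ frechetNCT (epigraph2 F) q',
      tnorm (q' - ((x k, yb), r k)) < ((k : ℝ) + 1)⁻¹ ∧
      ‖w'.1.1 - (w k).1‖ < ((k : ℝ) + 1)⁻¹ ∧ |w'.2 - (w k).2| < ((k : ℝ) + 1)⁻¹ := by
    intro k
    have hmemb : (((x k, yb), r k) : (Eu n × Eu m) × ℝ) ∈ epigraph2 F := hr k
    have hyp : ∀ ε > 0, ∃ δ > 0, ∀ p ∈ epigraph2 F, p.1.2 = yb →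
        tnorm (p - ((x k, yb), r k)) < δ →
        tinner (((w k).1, (0 : Eu m)), (w k).2) (p - ((x k, yb), r k))
          ≤ ε * tnorm (p - ((x k, yb), r k)) := by
      intro ε hε
      obtain ⟨δ, hδ, hδ2⟩ := (hw k).2 ε hε
      refine ⟨δ, hδ, fun p hp hyy htn => ?_⟩
      have hyz : p.1.2 - yb = 0 := by rw [hyy, sub_self]
      have hp' : ((p.1.1, p.2) : Eu n × ℝ) ∈ epigraph fun z => F (z, yb) := by
        show F (p.1.1, yb) ≤ (p.2 : EReal)
        rw [← hyy]
        exact hp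
      have hnorm_eq : pnorm (((p.1.1, p.2) : Eu n × ℝ) - (x k, r k))
          = tnorm (p - ((x k, yb), r k)) := by
        unfold pnorm tnorm
        congr 1
        show ‖p.1.1 - x k‖ ^ 2 + (p.2 - r k) ^ 2
          = ‖p.1.1 - x k‖ ^ 2 + ‖p.1.2 - yb‖ ^ 2 + (p.2 - r k) ^ 2
        rw [hyz, norm_zero]
        ring
      have hinner_eq : pinner (w k) (((p.1.1, p.2) : Eu n × ℝ) - (x k, r k))
          = tinner (((w k).1, (0 : Eu m)), (w k).2) (p - ((x k, yb), r k)) := by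
        unfold pinner tinner
        show ⟪(w k).1, p.1.1 - x k⟫ + (w k).2 * (p.2 - r k)
          = ⟪(w k).1, p.1.1 - x k⟫ + ⟪(0 : Eu m), p.1.2 - yb⟫ + (w k).2 * (p.2 - r k)
        rw [inner_zero_left]
        ring
      rw [← hnorm_eq, ← hinner_eq]
      exact hδ2 _ hp' (by rw [hnorm_eq]; exact htn)
    exact lemA hcl yb ((x k, yb), r k) hmemb rfl (w k).1 (w k).2 hyp _ (by positivity)
  choose q' hq'epi w' hw'NC hd hws hwt using happ
  set x2 : ℕ → Eu n × Eu m := fun k => (q' k).1 with hx2_def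
  set r2 : ℕ → ℝ := fun k => (q' k).2 with hr2_def
  have hr2 : ∀ k, F (x2 k) ≤ ((r2 k : ℝ) : EReal) := fun k => hq'epi k
  have hNC : ∀ k, w' k ∈ frechetNCT (epigraph2 F) (x2 k, r2 k) := fun k => hw'NC k
  -- epsilon sequence tends to zero
  have hεk : Tendsto (fun k : ℕ => ((k : ℝ) + 1)⁻¹) atTop (𝓝 0) := by
    apply tendsto_inv_atTop_zero.comp
    exact tendsto_atTop_add_const_right _ 1 tendsto_natCast_atTop_atTop
  have hw1 : Tendsto (fun k => (w k).1) atTop (𝓝 ξ) :=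
    (continuous_fst.tendsto _).comp hlim
  have hw2 : Tendsto (fun k => (w k).2) atTop (𝓝 L) :=
    (continuous_snd.tendsto _).comp hlim
  have hv11 : Tendsto (fun k => (w' k).1.1) atTop (𝓝 ξ) := by
    apply tendsto_of_norm_sub hw1
    exact squeeze_zero (fun k => norm_nonneg _) (fun k => le_of_lt (hws k)) hεk
  have hv2c : Tendsto (fun k => (w' k).2) atTop (𝓝 L) := by
    apply tendsto_of_norm_sub hw2
    exact squeeze_zero (fun k => abs_nonneg _) (fun k => le_of_lt (hwt k)) hεk
  -- the base points go to infinity in the right direction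
  have hdist0 : Tendsto (fun k => pnorm2 (x2 k - (x k, yb))) atTop (𝓝 0) := by
    apply squeeze_zero (fun k => pnorm2_nonneg _) (fun k => ?_) hεk
    calc pnorm2 (x2 k - (x k, yb)) = pnorm2 ((q' k - ((x k, yb), r k)).1) := rfl
    _ ≤ tnorm (q' k - ((x k, yb), r k)) := pnorm2_fst_le_tnorm _
    _ ≤ ((k : ℝ) + 1)⁻¹ := le_of_lt (hd k)
  have hdir2 : TendstoDirInfty2 x2 (u, (0 : Eu m)) :=
    dirinfty2_perturb (base_lift hdir yb) hdist0
  -- dichotomy on the middle components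
  by_cases hB : ∀ C : ℝ, ∀ᶠ k in atTop, C ≤ ‖(w' k).1.2‖
  · -- unbounded case: contradiction with the qualification condition
    exfalso
    have htn_inf : Tendsto (fun k => tnorm (w' k)) atTop atTop := by
      apply tendsto_atTop_mono (fun k => comp12_le_tnorm (w' k))
      exact tendsto_atTop.mpr hB
    obtain ⟨φ0, hφ0, hφ0ge⟩ := extraction_of_frequently_atTop
      ((htn_inf.eventually_ge_atTop 1).frequently)
    set V : ℕ → (Eu n × Eu m) × ℝ := fun j => (tnorm (w' (φ0 j)))⁻¹ • w' (φ0 j) with hV_def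
    have htpos : ∀ j, (0:ℝ) < tnorm (w' (φ0 j)) := fun j => lt_of_lt_of_le one_pos (hφ0ge j)
    have hVnc : ∀ j, V j ∈ frechetNCT (epigraph2 F) (x2 (φ0 j), r2 (φ0 j)) := fun j =>
      frechetNCT_smul _ (inv_nonneg.mpr (tnorm_nonneg _)) (hNC (φ0 j))
    have hVt1 : ∀ j, tnorm (V j) = 1 := by
      intro j
      rw [hV_def]
      simp only []
      rw [tnorm_smul, abs_of_pos (inv_pos.mpr (htpos j))]
      exact inv_mul_cancel₀ (ne_of_gt (htpos j))
    have hVball : ∀ j, V j ∈ Metric.closedBall (0 : (Eu n × Eu m) × ℝ) 1 := by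
      intro j
      rw [Metric.mem_closedBall, dist_zero_right]
      calc ‖V j‖ ≤ tnorm (V j) := norm_le_tnorm _
      _ = 1 := hVt1 j
    obtain ⟨Vhat, _, ψ, hψ, hVtend⟩ :=
      (isCompact_closedBall (0 : (Eu n × Eu m) × ℝ) 1).tendsto_subseq hVball
    -- limits of the first and last components of V are 0
    have htninv : Tendsto (fun j => (tnorm (w' (φ0 j)))⁻¹) atTop (𝓝 0) :=
      tendsto_inv_atTop_zero.comp (htn_inf.comp hφ0.tendsto_atTop)
    have hV11 : Tendsto (fun j => (V j).1.1) atTop (𝓝 0) := by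
      have hg : Tendsto (fun j => (tnorm (w' (φ0 j)))⁻¹ * ‖(w' (φ0 j)).1.1‖) atTop (𝓝 0) := by
        have hnorm : Tendsto (fun j => ‖(w' (φ0 j)).1.1‖) atTop (𝓝 ‖ξ‖) :=
          (continuous_norm.tendsto _).comp (hv11.comp hφ0.tendsto_atTop)
        have := htninv.mul hnorm
        simpa using this
      refine squeeze_zero_norm (fun j => ?_) hg
      rw [show (V j).1.1 = (tnorm (w' (φ0 j)))⁻¹ • (w' (φ0 j)).1.1 from rfl, norm_smul,
        Real.norm_eq_abs, abs_of_nonneg (inv_nonneg.mpr (tnorm_nonneg _))]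
    have hV2 : Tendsto (fun j => (V j).2) atTop (𝓝 0) := by
      have hg : Tendsto (fun j => (tnorm (w' (φ0 j)))⁻¹ * |(w' (φ0 j)).2|) atTop (𝓝 0) := by
        have hnorm : Tendsto (fun j => |(w' (φ0 j)).2|) atTop (𝓝 |L|) :=
          (continuous_abs.tendsto _).comp (hv2c.comp hφ0.tendsto_atTop)
        have := htninv.mul hnorm
        simpa using this
      refine squeeze_zero_norm (fun j => ?_) hg
      rw [show (V j).2 = (tnorm (w' (φ0 j)))⁻¹ * (w' (φ0 j)).2 from rfl, Real.norm_eq_abs,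
        abs_mul, abs_of_nonneg (inv_nonneg.mpr (tnorm_nonneg _))]
    -- identify components of Vhat
    have hc11 : Vhat.1.1 = 0 := by
      have t1 : Tendsto (fun j => (V (ψ j)).1.1) atTop (𝓝 Vhat.1.1) :=
        ((continuous_fst.fst).tendsto _).comp hVtend
      have t2 : Tendsto (fun j => (V (ψ j)).1.1) atTop (𝓝 0) :=
        hV11.comp hψ.tendsto_atTop
      exact tendsto_nhds_unique t1 t2
    have hc2 : Vhat.2 = 0 := by
      have t1 : Tendsto (fun j => (V (ψ j)).2) atTop (𝓝 Vhat.2) :=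
        (continuous_snd.tendsto _).comp hVtend
      have t2 : Tendsto (fun j => (V (ψ j)).2) atTop (𝓝 0) :=
        hV2.comp hψ.tendsto_atTop
      exact tendsto_nhds_unique t1 t2
    have htnVhat : tnorm Vhat = 1 := by
      have t1 : Tendsto (fun j => tnorm (V (ψ j))) atTop (𝓝 (tnorm Vhat)) :=
        (tnorm_continuous.tendsto _).comp hVtend
      have t2 : Tendsto (fun j => tnorm (V (ψ j))) atTop (𝓝 1) := by
        apply tendsto_const_nhds.congr
        intro j
        exact (hVt1 (ψ j)).symm
      exact tendsto_nhds_unique t1 t2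
    set ηs : Eu m := Vhat.1.2 with hηs_def
    have hVhat_eq : Vhat = (((0 : Eu n), ηs), (0 : ℝ)) := by
      rw [hηs_def, ← hc11, ← hc2]
    have hmem : ((0 : Eu n), ηs) ∈ dirSingSubdiffInfty2 F (u, (0 : Eu m)) := by
      refine ⟨fun j => x2 (φ0 (ψ j)), fun j => r2 (φ0 (ψ j)), fun j => V (ψ j), ?_, ?_, ?_, ?_⟩
      · exact dirinfty2_subseq hdir2 (hφ0.comp hψ)
      · intro j; exact hr2 _
      · intro j; exact hVnc (ψ j)
      · rw [← hVhat_eq]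
        exact hVtend
    have hη0 : ηs = 0 := hqc ηs hmem
    have : tnorm Vhat = 0 := by
      rw [hVhat_eq, hη0]
      exact tnorm_zero
    rw [htnVhat] at this
    exact one_ne_zero this
  · -- bounded case: extract a convergent subsequence of the middle components
    push_neg at hB
    obtain ⟨C, hC⟩ := hB
    have hfreq : ∃ᶠ k in atTop, ‖(w' k).1.2‖ < C := by
      have := Filter.not_eventually.mp hC
      apply this.mono
      intro k hk
      exact not_not.mp hk
    obtain ⟨φ0, hφ0, hφ0lt⟩ := extraction_of_frequently_atTop hfreq
    have hball : ∀ j, (w' (φ0 j)).1.2 ∈ Metric.closedBall (0 : Eu m) C := by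
      intro j
      rw [Metric.mem_closedBall, dist_zero_right]
      exact le_of_lt (hφ0lt j)
    obtain ⟨η, _, ψ, hψ, hηtend⟩ := (isCompact_closedBall (0 : Eu m) C).tendsto_subseq hball
    refine ⟨η, fun j => x2 (φ0 (ψ j)), fun j => r2 (φ0 (ψ j)), fun j => w' (φ0 (ψ j)),
      dirinfty2_subseq hdir2 (hφ0.comp hψ), fun j => hr2 _, fun j => hNC _, ?_⟩
    have h1 : Tendsto (fun j => (w' (φ0 (ψ j))).1.1) atTop (𝓝 ξ) :=
      hv11.comp (hφ0.comp hψ).tendsto_atTop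
    have h3 : Tendsto (fun j => (w' (φ0 (ψ j))).2) atTop (𝓝 L) :=
      hv2c.comp (hφ0.comp hψ).tendsto_atTop
    have h2 : Tendsto (fun j => (w' (φ0 (ψ j))).1.2) atTop (𝓝 η) := hηtend
    exact (h1.prodMk_nhds h2).prodMk_nhds h3

end API5
/-- Directional partial subdifferentials at infinity. -/
theorem dirSubdiffInfty_partial {n m : ℕ} (F : Eu n × Eu m → EReal)
    (hFproper : ∃ z, F z ≠ ⊤) (hF : LowerSemicontinuous F) (hFbot : ∀ z, F z ≠ ⊥)
    (yb : Eu m) (u : Eu n) (hu : ‖u‖ = 1)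
    (hqc : ∀ η : Eu m, ((0 : Eu n), η) ∈ dirSingSubdiffInfty2 F (u, (0 : Eu m)) → η = 0) :
    dirSubdiffInfty (fun x => F (x, yb)) u ⊆
      {ξ | ∃ η : Eu m, (ξ, η) ∈ dirSubdiffInfty2 F (u, (0 : Eu m))} ∧
    dirSingSubdiffInfty (fun x => F (x, yb)) u ⊆
      {ξ | ∃ η : Eu m, (ξ, η) ∈ dirSingSubdiffInfty2 F (u, (0 : Eu m))} := by
  constructor
  · intro ξ hξ
    obtain ⟨x, r, w, hdir, hrk, hwk, hlim⟩ := hξ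
    obtain ⟨η, x2, r2, v2, h1, h2, h3, h4⟩ :=
      main_aux hF yb u hqc ξ (-1) x r w hdir hrk hwk hlim
    exact ⟨η, x2, r2, v2, h1, h2, h3, h4⟩
  · intro ξ hξ
    obtain ⟨x, r, w, hdir, hrk, hwk, hlim⟩ := hξ
    obtain ⟨η, x2, r2, v2, h1, h2, h3, h4⟩ :=
      main_aux hF yb u hqc ξ 0 x r w hdir hrk hwk hlim
    exact ⟨η, x2, r2, v2, h1, h2, h3, h4⟩
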